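/- arXiv:1609.00123 — 5 statements merged into one kernel-verified Lean document; each statement's English description precedes it below -/
import Mathlib

section
/- For matrices A ∈ F^{m×r} and B ∈ F^{n×r}, let A ⊙ B be the Khatri–Rao product (the matrix whose i-th column is the Kronecker product a_i ⊗ b_i of the i-th columns of A and B). If the columns of A are pairwise linearly independent (Kruskal rank of A ≥ 2) and every column of B is nonzero, then the columns of A ⊙ B corresponding to any pair of indices are linearly independent, i.e., the Kruskal rank of A ⊙ B is at least 2. -/
/-- Khatri–Rao product step: if the columns of `A` are pairwise linearly independent
(Kruskal rank of `A` at least 2) and every column of `B` is nonzero, then any pair of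
columns of the Khatri–Rao product `A ⊙ B` (columnwise Kronecker product) is linearly
independent, i.e., the Kruskal rank of `A ⊙ B` is at least 2. -/
theorem khatriRao_kruskalRank_two {F : Type*} [Field F] {m n r : ℕ}
    (A : Matrix (Fin m) (Fin r) F) (B : Matrix (Fin n) (Fin r) F)
    (hA : ∀ i j : Fin r, i ≠ j →
      LinearIndependent F ![fun a => A a i, fun a => A a j])
    (hB : ∀ i : Fin r, (fun a => B a i) ≠ (0 : Fin n → F)) :
    ∀ i j : Fin r, i ≠ j →
      LinearIndependent F ![fun q : Fin m × Fin n => A q.1 i * B q.2 i,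
                            fun q : Fin m × Fin n => A q.1 j * B q.2 j] := by
  intro i j hij
  rw [LinearIndependent.pair_iff]
  intro s t hst
  have hA' := LinearIndependent.pair_iff.mp (hA i j hij)
  obtain ⟨qi, hqi⟩ : ∃ q, B q i ≠ 0 := by
    by_contra h; push_neg at h
    exact hB i (funext fun q => h q)
  obtain ⟨qj, hqj⟩ : ∃ q, B q j ≠ 0 := by
    by_contra h; push_neg at h
    exact hB j (funext fun q => h q)
  have key : ∀ q : Fin n, s * B q i = 0 ∧ t * B q j = 0 := by
    intro q
    apply hA' (s * B q i) (t * B q j)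
    funext p
    have h1 := congrFun hst (p, q)
    simp only [Pi.add_apply, Pi.smul_apply, smul_eq_mul, Pi.zero_apply] at h1 ⊢
    linear_combination h1
  constructor
  · rcases mul_eq_zero.mp (key qi).1 with h | h
    · exact h
    · exact absurd h hqi
  · rcases mul_eq_zero.mp (key qj).2 with h | h
    · exact h
    · exact absurd h hqj
end

section
/- For a generic tuple of matrices (A_1, ..., A_d) ∈ F^{n_1×r} × ... × F^{n_d×r} (i.e., for all tuples outside a proper Zariski-closed subset), for every nonempty subset h ⊆ {1,...,d} the Khatri–Rao product A_{h_1} ⊙ A_{h_2} ⊙ ... ⊙ A_{h_k} has the maximal possible rank min{r, ∏_{i∈h} n_i}. -/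
/-!
For each subset `h` let `k = min r (∏ i ∈ h, n i)`. A `k × k` minor of the Khatri–Rao product
is a polynomial in the entries of the `A_i`, and it forces rank `k` wherever it does not vanish.
Choose the first `k` columns and the rows whose mixed-radix index `∑ f_i w_i` (weights
`w_i` = product of the earlier `n`'s) is `< k`. For `A_i (p, j) = j ^ (p w_i)` the product has
entries `j ^ (∑ f_i w_i)`, so this minor becomes a Vandermonde determinant with nodes
`0, …, k - 1` and is a nonzero polynomial. Take `P` to be the product of these minors over `h`.
-/

open MvPolynomial Matrix

section KhatriRao

variable {R : Type*} [CommSemiring R] {ι κ : Type*} {m : ι → Type*}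

def khatriRao [Fintype ι] (A : ∀ i, Matrix (m i) κ R) : Matrix (∀ i, m i) κ R :=
  of fun f j => ∏ i, A i (f i) j

theorem khatriRao_map [Fintype ι] {S : Type*} [CommSemiring S] (φ : R →+* S)
    (A : ∀ i, Matrix (m i) κ R) :
    (khatriRao A).map φ = khatriRao fun i => (A i).map φ := by
  ext f j
  simp [khatriRao]

noncomputable def genericMatrices : ∀ i, Matrix (m i) κ (MvPolynomial ((i : ι) × (m i × κ)) R) :=
  fun i => of fun p j => X ⟨i, p, j⟩

theorem genericMatrices_map_eval (A : ∀ i, Matrix (m i) κ R) (i : ι) :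
    (genericMatrices i).map (eval fun x => A x.1 x.2.1 x.2.2) = A i := by
  ext p j
  simp [genericMatrices]

def mixedRadixWeight {d : ℕ} (n : Fin d → ℕ) (t : Fin d) : ℕ :=
  ∏ j : Fin t, n (Fin.castLE t.is_lt.le j)

def mixedRadixEquiv {d : ℕ} (e : ι ≃ Fin d) (n : ι → ℕ) :
    (∀ i, Fin (n i)) ≃ Fin (∏ t, n (e.symm t)) :=
  (Equiv.piCongrLeft' (fun i => Fin (n i)) e).trans finPiFinEquiv

theorem khatriRao_pow_eq_pow_mixedRadixEquiv [Fintype ι] {d : ℕ} (e : ι ≃ Fin d) (n : ι → ℕ)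
    (x : κ → R) :
    khatriRao (fun i => of fun (p : Fin (n i)) j =>
        x j ^ ((p : ℕ) * mixedRadixWeight (n ∘ e.symm) (e i))) =
      of fun f j => x j ^ (mixedRadixEquiv e n f : ℕ) := by
  ext f j
  simp only [khatriRao, of_apply, Finset.prod_pow_eq_pow_sum, mixedRadixEquiv,
    Equiv.trans_apply, finPiFinEquiv_apply]
  congr 1
  refine (Fintype.sum_equiv e.symm _ _ fun t => ?_).symm
  rw [Equiv.apply_symm_apply]
  rfl

end KhatriRao

theorem Matrix.card_le_rank_of_det_submatrix_ne_zero {K : Type*} [Field K] {m n l : Type*}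
    [Fintype n] [Fintype l] [DecidableEq l] (A : Matrix m n K) (ρ : l → m) (c : l → n)
    (h : (A.submatrix ρ c).det ≠ 0) : Fintype.card l ≤ A.rank := by
  rw [← rank_of_isUnit _ ((isUnit_iff_isUnit_det _).2 (isUnit_iff_ne_zero.2 h))]
  exact rank_submatrix_le A ρ c

theorem MvPolynomial.exists_ne_zero_forall_eval_ne_zero_card_le_rank {σ K : Type*} [Field K]
    {m n l : Type*} [Fintype n] [Fintype l] [DecidableEq l] (M : Matrix m n (MvPolynomial σ K))
    (ρ : l → m) (c : l → n) (a : σ → K) (ha : ((M.map (eval a)).submatrix ρ c).det ≠ 0) :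
    ∃ P : MvPolynomial σ K, P ≠ 0 ∧
      ∀ v, eval v P ≠ 0 → Fintype.card l ≤ (M.map (eval v)).rank := by
  have eval_det (v : σ → K) :
      eval v (M.submatrix ρ c).det = ((M.map (eval v)).submatrix ρ c).det :=
    RingHom.map_det _ _
  refine ⟨(M.submatrix ρ c).det, fun h0 => ha ?_, fun v hv => ?_⟩
  · rw [← eval_det, h0, map_zero]
  · exact card_le_rank_of_det_submatrix_ne_zero _ ρ c (eval_det v ▸ hv)

theorem exists_det_submatrix_khatriRao_ne_zero (K : Type*) [Field K] [CharZero K]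
    {ι : Type*} [Fintype ι] (n : ι → ℕ) (r : ℕ) :
    ∃ (W : ∀ i, Matrix (Fin (n i)) (Fin r) K) (ρ : Fin (min r (∏ i, n i)) → ∀ i, Fin (n i))
      (c : Fin (min r (∏ i, n i)) → Fin r), ((khatriRao W).submatrix ρ c).det ≠ 0 := by
  set e := Fintype.equivFin ι
  have hN : ∏ t, n (e.symm t) = ∏ i, n i := e.symm.prod_comp n
  set k := min r (∏ i, n i)
  let W : ∀ i, Matrix (Fin (n i)) (Fin r) K := fun i =>
    of fun p j => ((j : ℕ) : K) ^ ((p : ℕ) * mixedRadixWeight (n ∘ e.symm) (e i))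
  let ρ : Fin k → ∀ i, Fin (n i) := fun a =>
    (mixedRadixEquiv e n).symm (Fin.castLE (hN ▸ min_le_right _ _) a)
  let c : Fin k → Fin r := Fin.castLE (min_le_left _ _)
  have vandermonde_eq :
      (khatriRao W).submatrix ρ c = (vandermonde fun b : Fin k => ((b : ℕ) : K))ᵀ := by
    rw [khatriRao_pow_eq_pow_mixedRadixEquiv]
    ext a b
    simp [ρ, c, vandermonde_apply]
  refine ⟨W, ρ, c, ?_⟩
  rw [vandermonde_eq, det_transpose, det_vandermonde_ne_zero_iff]
  exact fun a b h => Fin.val_injective (Nat.cast_injective h)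

theorem exists_ne_zero_forall_eval_ne_zero_rank_khatriRao_eq (K : Type*) [Field K] [CharZero K]
    {ι : Type*} [Fintype ι] (n : ι → ℕ) (r : ℕ) :
    ∃ P : MvPolynomial ((i : ι) × (Fin (n i) × Fin r)) K, P ≠ 0 ∧
      ∀ A : ∀ i, Matrix (Fin (n i)) (Fin r) K,
        eval (fun x => A x.1 x.2.1 x.2.2) P ≠ 0 → (khatriRao A).rank = min r (∏ i, n i) := by
  have eval_generic (A : ∀ i, Matrix (Fin (n i)) (Fin r) K) :
      (khatriRao genericMatrices).map (eval fun x => A x.1 x.2.1 x.2.2) = khatriRao A := by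
    simp only [khatriRao_map, genericMatrices_map_eval]
  obtain ⟨W, ρ, c, hW⟩ := exists_det_submatrix_khatriRao_ne_zero K n r
  obtain ⟨P, hP0, hP⟩ := exists_ne_zero_forall_eval_ne_zero_card_le_rank
    (khatriRao genericMatrices) ρ c _ (by rwa [eval_generic W])
  refine ⟨P, hP0, fun A hA => le_antisymm (le_min ?_ ?_) ?_⟩
  · simpa using rank_le_card_width (khatriRao A)
  · classical
    simpa using rank_le_card_height (khatriRao A)
  · simpa [eval_generic] using hP _ hA

/-- For a generic tuple of matrices `(A_1, ..., A_d)` (i.e. whenever a suitable nonzero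
polynomial in the entries does not vanish), for every nonempty subset `h ⊆ {1,...,d}` the
Khatri–Rao product of the `A_i`, `i ∈ h`, has the maximal possible rank
`min {r, ∏_{i ∈ h} n_i}`. -/
theorem generic_khatriRao_max_rank (F : Type*) [RCLike F] (d r : ℕ) (n : Fin d → ℕ) :
    ∃ P : MvPolynomial ((i : Fin d) × (Fin (n i) × Fin r)) F, P ≠ 0 ∧
      ∀ A : (i : Fin d) → Matrix (Fin (n i)) (Fin r) F,
        MvPolynomial.eval (fun x => A x.1 x.2.1 x.2.2) P ≠ 0 →
        ∀ h : Finset (Fin d), h.Nonempty →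
          (Matrix.of fun (f : (i : {x // x ∈ h}) → Fin (n i.1)) (j : Fin r) =>
              ∏ i : {x // x ∈ h}, A i.1 (f i) j).rank
            = min r (∏ i ∈ h, n i) := by
  choose P hP0 hP using fun h : Finset (Fin d) =>
    exists_ne_zero_forall_eval_ne_zero_rank_khatriRao_eq F (fun i : h => n i) r
  let incl (h : Finset (Fin d)) :
      (i : h) × (Fin (n i) × Fin r) → (i : Fin d) × (Fin (n i) × Fin r) :=
    Sigma.map Subtype.val fun _ => id
  have incl_injective (h) : Function.Injective (incl h) :=
    Subtype.val_injective.sigma_map fun _ => Function.injective_id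
  refine ⟨∏ h, rename (incl h) (P h), Finset.prod_ne_zero_iff.2 fun h _ => ?_, ?_⟩
  · exact (map_ne_zero_iff _ (rename_injective _ (incl_injective h))).2 (hP0 h)
  intro A hA h _
  rw [← Finset.prod_coe_sort h n]
  refine hP h (fun i => A i) ?_
  rw [map_prod, Finset.prod_ne_zero_iff] at hA
  have := hA h (Finset.mem_univ h)
  rwa [eval_rename] at this
end

section
/- Let Z be a finite set of points in projective space ℙ^n over a field, with Hilbert function H_Z(d) = dim (R/I_Z)_d where R = k[x_0,...,x_n] and I_Z is the homogeneous ideal of Z. If H_Z(d_0) = H_Z(d_0 + 1) for some d_0 ≥ 0, then H_Z(d) = |Z| for all d ≥ d_0. -/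
/-!
Let `V ⊆ k^Z` be the space of values of linear forms at the points; since `R_d` is spanned by
products of `d` linear forms, `H_Z(d) = dim V^d`, the power taken in the algebra `k^Z`. Over an
infinite field some linear form `L` vanishes at no point, so `L` is a unit of `k^Z` lying in `V`,
and `L • V^d ⊆ V^(d+1)` with equal dimensions. Hence `H_Z(d) = H_Z(d+1)` forces
`V^(d+1) = L • V^d`, and then `V^(d+2) = V * L • V^d = L • V^(d+1)`: the Hilbert function is
constant from `d₀` on. Products of a power of `L` with forms separating one point from each of the
others show `V^d = k^Z` for `d ≥ |Z| - 1`.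
-/

open MvPolynomial

/-- Evaluation of a multivariate polynomial at a point, as a linear map. -/
noncomputable def evalAtₗ {k : Type*} [CommSemiring k] {n : ℕ} (a : Fin n → k) :
    MvPolynomial (Fin n) k →ₗ[k] k := (aeval a).toLinearMap

/-- The Hilbert function of a finite collection of (representatives of) points of
projective space: `H_Z(d)` is the rank of the evaluation map from the space of
homogeneous polynomials of degree `d` to `k^Z`. -/
noncomputable def hilbertFunction (k : Type*) [Field k] {n : ℕ} {ι : Type*} [Fintype ι]
    (v : ι → Fin n → k) (d : ℕ) : ℕ :=
  Module.finrank k (LinearMap.range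
    ((LinearMap.pi fun i : ι => evalAtₗ (v i)).comp
      (homogeneousSubmodule (Fin n) k d).subtype))

open scoped Pointwise

namespace Submodule

section CommSemiring

variable {R A : Type*} [CommSemiring R] [CommSemiring A] [Algebra R A] {V : Submodule R A} {u : A}

lemma smul_pow_le_pow_succ (hu : u ∈ V) (d : ℕ) : u • V ^ d ≤ V ^ (d + 1) := by
  rw [← span_singleton_mul, pow_succ']
  exact mul_le_mul_left (span_le.2 (Set.singleton_subset_iff.2 hu)) _

lemma pow_add_two_eq_smul_of_pow_succ_eq_smul {d : ℕ} (h : V ^ (d + 1) = u • V ^ d) :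
    V ^ (d + 2) = u • V ^ (d + 1) := by
  calc V ^ (d + 2) = V * (span R {u} * V ^ d) := by rw [pow_succ', h, span_singleton_mul]
    _ = u • V ^ (d + 1) := by rw [mul_left_comm, ← pow_succ', span_singleton_mul]

lemma prod_mem_pow_card {ι : Type*} {s : Finset ι} {f : ι → A} (hf : ∀ i ∈ s, f i ∈ V) :
    ∏ i ∈ s, f i ∈ V ^ s.card := by
  induction s using Finset.cons_induction with
  | empty => simpa using (one_le (R := R) (A := A)).1 le_rfl
  | cons a s ha ih =>
    rw [Finset.prod_cons, Finset.card_cons, pow_succ']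
    exact mul_mem_mul (hf a (Finset.mem_cons_self a s))
      (ih fun i hi => hf i (Finset.mem_cons_of_mem hi))

end CommSemiring

section Field

variable {K A : Type*} [Field K] [CommRing A] [Algebra K A] {V : Submodule K A} {u : A}

lemma finrank_smul_of_isUnit (hu : IsUnit u) (p : Submodule K A) :
    Module.finrank K ↥(u • p) = Module.finrank K p :=
  (DistribMulAction.toLinearEquiv K A hu.unit).finrank_map_eq p

lemma pow_succ_eq_smul_of_finrank_eq [FiniteDimensional K A] (hu : IsUnit u) (huV : u ∈ V)
    {d : ℕ} (h : Module.finrank K ↥(V ^ d) = Module.finrank K ↥(V ^ (d + 1))) :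
    V ^ (d + 1) = u • V ^ d :=
  (eq_of_le_of_finrank_eq (smul_pow_le_pow_succ huV d)
    (by rw [finrank_smul_of_isUnit hu, h])).symm

theorem finrank_pow_eq_of_finrank_pow_succ_eq [FiniteDimensional K A] (hu : IsUnit u)
    (huV : u ∈ V) {d : ℕ}
    (h : Module.finrank K ↥(V ^ d) = Module.finrank K ↥(V ^ (d + 1))) :
    ∀ e, d ≤ e → Module.finrank K ↥(V ^ e) = Module.finrank K ↥(V ^ d) := by
  have hstep : ∀ t, V ^ (d + t + 1) = u • V ^ (d + t) := by
    intro t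
    induction t with
    | zero => exact pow_succ_eq_smul_of_finrank_eq hu huV h
    | succ t ih => exact pow_add_two_eq_smul_of_pow_succ_eq_smul ih
  intro e hde
  obtain ⟨t, rfl⟩ := Nat.exists_eq_add_of_le hde
  induction t with
  | zero => rfl
  | succ t ih => rw [← add_assoc, hstep, finrank_smul_of_isUnit hu, ih (by omega)]

end Field

section Pi

variable {K ι : Type*} [Field K] [Fintype ι] [DecidableEq ι]

lemma eq_top_of_forall_exists_mem_support_eq_singleton {p : Submodule K (ι → K)}
    (h : ∀ i, ∃ w ∈ p, w i ≠ 0 ∧ ∀ j ≠ i, w j = 0) : p = ⊤ := by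
  refine eq_top_iff.2 ((Pi.basisFun K ι).span_eq.symm.le.trans (span_le.2 ?_))
  rintro _ ⟨i, rfl⟩
  obtain ⟨w, hw, hwi, hwj⟩ := h i
  rw [SetLike.mem_coe]
  convert p.smul_mem (w i)⁻¹ hw using 1
  funext j
  rcases eq_or_ne j i with rfl | hji
  · simp [hwi]
  · simp [hwj j hji, hji]

lemma pow_eq_top_of_separates {V : Submodule K (ι → K)} {u : ι → K} (hu : IsUnit u)
    (huV : u ∈ V) (hsep : ∀ i j, i ≠ j → ∃ f ∈ V, f i ≠ 0 ∧ f j = 0) {e : ℕ}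
    (he : Fintype.card ι - 1 ≤ e) : V ^ e = ⊤ := by
  have hsep' : ∀ i j, ∃ f ∈ V, i ≠ j → f i ≠ 0 ∧ f j = 0 := fun i j =>
    if hij : i = j then ⟨u, huV, fun h => (h hij).elim⟩
    else (hsep i j hij).imp fun _ hf => ⟨hf.1, fun _ => hf.2⟩
  choose f hfV hf using hsep'
  obtain ⟨t, rfl⟩ := Nat.exists_eq_add_of_le he
  refine eq_top_of_forall_exists_mem_support_eq_singleton fun i => ?_
  refine ⟨(∏ j ∈ Finset.univ.erase i, f i j) * u ^ t, ?_, ?_, fun j hji => ?_⟩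
  · rw [pow_add, ← Finset.card_univ, ← Finset.card_erase_of_mem (Finset.mem_univ i)]
    exact mul_mem_mul (prod_mem_pow_card fun j _ => hfV i j) (pow_mem_pow _ huV t)
  · simp only [Pi.mul_apply, Finset.prod_apply, Pi.pow_apply]
    refine mul_ne_zero (Finset.prod_ne_zero_iff.2 fun j hj => ?_)
      (pow_ne_zero _ (Pi.isUnit_iff.1 hu i).ne_zero)
    exact (hf i j (Finset.ne_of_mem_erase hj).symm).1
  · simp only [Pi.mul_apply, Finset.prod_apply]
    exact mul_eq_zero_of_left
      (Finset.prod_eq_zero (f := fun c => f i c j) (Finset.mem_erase.2 ⟨hji, Finset.mem_univ j⟩)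
        (hf i j hji.symm).2) _

end Pi

end Submodule

namespace Module

variable {K E : Type*} [Field K] [AddCommGroup E] [Module K E]

lemma exists_dual_apply_ne_zero_apply_eq_zero {x y : E} (h : x ∉ K ∙ y) :
    ∃ φ : Dual K E, φ x ≠ 0 ∧ φ y = 0 := by
  obtain ⟨φ, hφx, hφy⟩ := Submodule.exists_dual_map_eq_bot_of_notMem h inferInstance
  refine ⟨φ, hφx, ?_⟩
  have := Submodule.mem_map_of_mem (f := φ) (Submodule.mem_span_singleton_self y)
  rwa [hφy, Submodule.mem_bot] at this

end Module

section LinearFormValues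

variable {k σ ι : Type*} [Field k]

noncomputable def evalAtPoints (v : ι → σ → k) : MvPolynomial σ k →ₐ[k] ι → k :=
  AlgHom.pi fun i => aeval (v i)

noncomputable def linearFormValues (v : ι → σ → k) : Submodule k (ι → k) :=
  (homogeneousSubmodule σ k 1).map (evalAtPoints v).toLinearMap

lemma hilbertFunction_eq_finrank_pow {n : ℕ} [Fintype ι] (v : ι → Fin n → k) (d : ℕ) :
    hilbertFunction k v d = Module.finrank k ↥(linearFormValues v ^ d) := by
  rw [hilbertFunction, LinearMap.range_comp, Submodule.range_subtype,
    ← homogeneousSubmodule_one_pow, linearFormValues, ← Submodule.map_pow]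
  rfl

lemma dual_apply_mem_linearFormValues [Fintype σ] (v : ι → σ → k)
    (φ : Module.Dual k (σ → k)) :
    (fun i => φ (v i)) ∈ linearFormValues v := by
  classical
  refine ⟨∑ j, C (φ (Pi.single j 1)) * X j, ?_, ?_⟩
  · exact IsHomogeneous.sum _ _ _ fun j _ => isHomogeneous_C_mul_X _ _
  · funext i
    conv_rhs => rw [← (Pi.basisFun k σ).sum_repr (v i)]
    simp [evalAtPoints, mul_comm]

lemma exists_isUnit_mem_linearFormValues [Infinite k] [Finite ι] [Fintype σ] {v : ι → σ → k}
    (hv : ∀ i, v i ≠ 0) : ∃ u, IsUnit u ∧ u ∈ linearFormValues v := by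
  obtain ⟨φ, hφ⟩ := Module.exists_dual_forall_apply_ne_zero (K := k) v hv
  exact ⟨_, Pi.isUnit_iff.2 fun i => (hφ i).isUnit, dual_apply_mem_linearFormValues v φ⟩

lemma linearFormValues_separates [Fintype σ] {v : ι → σ → k}
    (hv : ∀ i j, i ≠ j → ∀ c : k, v i ≠ c • v j) :
    ∀ i j, i ≠ j → ∃ f ∈ linearFormValues v, f i ≠ 0 ∧ f j = 0 := by
  intro i j hij
  have hnot : v i ∉ k ∙ v j := fun hmem => by
    obtain ⟨c, hc⟩ := Submodule.mem_span_singleton.1 hmem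
    exact hv i j hij c hc.symm
  obtain ⟨φ, hφi, hφj⟩ := Module.exists_dual_apply_ne_zero_apply_eq_zero hnot
  exact ⟨_, dual_apply_mem_linearFormValues v φ, hφi, hφj⟩

end LinearFormValues

/-- If `H_Z(d₀) = H_Z(d₀+1)` for some `d₀ ≥ 0`, then `H_Z(d) = |Z|` for all `d ≥ d₀`. -/
theorem hilbertFunction_stabilizes {k : Type*} [Field k] [IsAlgClosed k] {n ℓ : ℕ}
    (v : Fin ℓ → Fin (n + 1) → k)
    (hv : ∀ i, v i ≠ 0)
    (hdist : ∀ i j, i ≠ j → ∀ c : k, v i ≠ c • v j)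
    (d₀ : ℕ) (h : hilbertFunction k v d₀ = hilbertFunction k v (d₀ + 1)) :
    ∀ d, d₀ ≤ d → hilbertFunction k v d = ℓ := by
  obtain ⟨u, hu, huV⟩ := exists_isUnit_mem_linearFormValues hv
  simp only [hilbertFunction_eq_finrank_pow] at h ⊢
  have hconst := Submodule.finrank_pow_eq_of_finrank_pow_succ_eq hu huV h
  intro d hd
  rw [hconst d hd, ← hconst (d₀ + (ℓ - 1)) (Nat.le_add_right _ _),
    Submodule.pow_eq_top_of_separates hu huV (linearFormValues_separates hdist)
      (by simp), finrank_top, Module.finrank_fin_fun]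
end

section
/- Let A and B be finite disjoint subsets of ℙ^n such that v_d(A) and v_d(B) are each linearly independent sets of points. Then dim(⟨v_d(A)⟩ ∩ ⟨v_d(B)⟩) = |A| + |B| − H_{A∪B}(d) − 1, where ⟨·⟩ denotes projective linear span and dim is projective dimension (with the empty set having dimension −1). -/
open MvPolynomial

open Matrix in
noncomputable instance monFintype (n d : ℕ) :
    Fintype {m : Fin n →₀ ℕ // (m.sum fun _ e => e) = d} := by
  have hle : ∀ m : {m : Fin n →₀ ℕ // (m.sum fun _ e => e) = d}, ∀ j, m.1 j < d + 1 := by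
    intro m j
    have h := Finsupp.le_degree j m.1
    have : Finsupp.degree m.1 = d := by
      rw [Finsupp.degree]; exact m.2
    omega
  exact Fintype.ofInjective
    (fun m : {m : Fin n →₀ ℕ // (m.sum fun _ e => e) = d} =>
      (fun j => (⟨m.1 j, hle m j⟩ : Fin (d + 1)) : Fin n → Fin (d + 1)))
    (by
      intro m m' h
      ext j
      have := congrFun h j
      simpa [Fin.ext_iff] using this)

/-- The degree-`d` Veronese coordinate vector of a point `a ∈ k^n`: its coordinates are
all monomials of degree `d` evaluated at `a`. -/
noncomputable def veronese {k : Type*} [CommSemiring k] {n : ℕ} (d : ℕ) (a : Fin n → k) :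
    {m : Fin n →₀ ℕ // (m.sum fun _ e => e) = d} → k :=
  fun m => ∏ j, a j ^ m.1 j

-- The Hilbert function equals the dimension of the span of the Veronese vectors
-- (row rank equals column rank).
open Matrix in
theorem hilbertFunction_eq_finrank_span {k : Type*} [Field k] {n : ℕ} {ι : Type*} [Fintype ι]
    (v : ι → Fin n → k) (d : ℕ) :
    hilbertFunction k v d =
      Module.finrank k (Submodule.span k (Set.range fun i => veronese d (v i))) := by
  classical
  set mon := {m : Fin n →₀ ℕ // (m.sum fun _ e => e) = d}
  set N : Matrix ι mon k := fun i m => veronese d (v i) m with hN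
  have hrow : N.rank = Module.finrank k (Submodule.span k (Set.range N)) :=
    N.rank_eq_finrank_span_row
  have hcol : N.rank = Module.finrank k (Submodule.span k (Set.range Nᵀ)) :=
    N.rank_eq_finrank_span_cols
  have hrange : LinearMap.range
      ((LinearMap.pi fun i : ι => evalAtₗ (v i)).comp
        (homogeneousSubmodule (Fin n) k d).subtype)
      = Submodule.span k (Set.range Nᵀ) := by
    rw [LinearMap.range_comp, Submodule.range_subtype,
      homogeneousSubmodule_eq_finsupp_supported, AddMonoidAlgebra.supported_eq_span_single,
      Submodule.map_span, ← Set.image_comp]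
    congr 1
    ext x
    constructor
    · rintro ⟨m, hm, rfl⟩
      have hm' : (m.sum fun _ e => e) = d := by
        exact hm
      refine ⟨⟨m, hm'⟩, ?_⟩
      ext i
      show veronese d (v i) ⟨m, hm'⟩ = aeval (v i) (AddMonoidAlgebra.single m (1:k))
      rw [show (AddMonoidAlgebra.single m (1:k) : MvPolynomial (Fin n) k) = monomial m 1 from rfl,
        aeval_monomial]
      simp [veronese, Finsupp.prod_pow]
    · rintro ⟨⟨m, hm'⟩, rfl⟩
      refine ⟨m, by exact hm', ?_⟩
      ext i
      show aeval (v i) (AddMonoidAlgebra.single m (1:k)) = veronese d (v i) ⟨m, hm'⟩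
      rw [show (AddMonoidAlgebra.single m (1:k) : MvPolynomial (Fin n) k) = monomial m 1 from rfl,
        aeval_monomial]
      simp [veronese, Finsupp.prod_pow]
  have : (Set.range fun i => veronese d (v i)) = Set.range N := rfl
  rw [hilbertFunction, hrange, ← hcol, hrow, this]

/-- Grassmann formula for spans of Veronese images: if `A` and `B` are disjoint finite
sets of points whose Veronese images are each linearly independent, then the projective
dimension of `⟨v_d(A)⟩ ∩ ⟨v_d(B)⟩` equals `|A| + |B| − H_{A∪B}(d) − 1`. -/
theorem dim_inter_span_veronese {k : Type*} [Field k] {n a b : ℕ} (d : ℕ)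
    (u : Fin a → Fin (n + 1) → k) (w : Fin b → Fin (n + 1) → k)
    (hu : LinearIndependent k fun i => veronese d (u i))
    (hw : LinearIndependent k fun j => veronese d (w j))
    (hdisj : ∀ i j, ∀ c : k, u i ≠ c • w j)
    (SA SB : Submodule k ({m : Fin (n + 1) →₀ ℕ // (m.sum fun _ e => e) = d} → k))
    (hSA : SA = Submodule.span k (Set.range fun i => veronese d (u i)))
    (hSB : SB = Submodule.span k (Set.range fun j => veronese d (w j))) :
    (Module.finrank k ↥(SA ⊓ SB) : ℤ) - 1 =
      (a : ℤ) + b - hilbertFunction k (Sum.elim u w) d - 1 := by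
  classical
  have hfinA : FiniteDimensional k SA := by
    rw [hSA]; exact FiniteDimensional.span_of_finite k (Set.finite_range _)
  have hfinB : FiniteDimensional k SB := by
    rw [hSB]; exact FiniteDimensional.span_of_finite k (Set.finite_range _)
  have hA : Module.finrank k SA = a := by
    rw [hSA]; simpa using finrank_span_eq_card hu
  have hB : Module.finrank k SB = b := by
    rw [hSB]; simpa using finrank_span_eq_card hw
  have hsup : SA ⊔ SB =
      Submodule.span k (Set.range fun i => veronese d (Sum.elim u w i)) := by
    have : (fun i => veronese d (Sum.elim u w i)) =
        Sum.elim (fun i => veronese d (u i)) (fun j => veronese d (w j)) := by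
      funext i; cases i <;> rfl
    rw [this, Set.Sum.elim_range, hSA, hSB, Submodule.span_union]
  have hH : hilbertFunction k (Sum.elim u w) d = Module.finrank k ↥(SA ⊔ SB) := by
    rw [hilbertFunction_eq_finrank_span, hsup]
  have grass := Submodule.finrank_sup_add_finrank_inf_eq SA SB
  rw [hA, hB] at grass
  omega
end

section
/- Reznick's identity: for every real φ and with R = 2^{-12}·[7·C(12,6)], the identity Σ_{k=0}^{6} (cos(kπ/7 + φ)·x + sin(kπ/7 + φ)·y)^{12} = R·(x² + y²)^6 holds as an identity of polynomials in x, y (equivalently, for all real x, y). -/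
/-! Write `cos θ · x + sin θ · y = (e^{iθ}(x - iy) + e^{-iθ}(x + iy)) / 2` and expand binomially:
the `j`-th term carries the factor `e^{2i(j - d)θ}`. Summed over the `n` equally spaced angles
`θ_k = kπ/n + φ`, this factor gives a geometric sum in the `n`-th root of unity `e^{2πi(j - d)/n}`,
which vanishes unless `n ∣ j - d`. Since `|j - d| ≤ d < n`, only the middle term
`C(2d, d) (x - iy)^d (x + iy)^d = C(2d, d) (x² + y²)^d` survives, `n` times. -/

open Real Finset

theorem IsPrimitiveRoot.geom_sum_zpow_eq_zero {K : Type*} [Field K] {ζ : K} {n : ℕ}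
    (hζ : IsPrimitiveRoot ζ n) {m : ℤ} (hm : ¬ (n : ℤ) ∣ m) :
    ∑ k ∈ range n, (ζ ^ m) ^ k = 0 := by
  have hne : ζ ^ m ≠ 1 := mt (hζ.zpow_eq_one_iff_dvd m).1 hm
  have hpow : (ζ ^ m) ^ n = 1 := by
    rw [← zpow_natCast, ← zpow_mul, mul_comm, zpow_mul, hζ.zpow_eq_one, one_zpow]
  rw [geom_sum_eq hne, hpow, sub_self, zero_div]

theorem mul_add_inv_mul_pow {K : Type*} [Field K] {u : K} (hu : u ≠ 0) (a b : K) (N : ℕ) :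
    (u * a + u⁻¹ * b) ^ N =
      ∑ j ∈ range (N + 1), u ^ (2 * (j : ℤ) - N) * (a ^ j * b ^ (N - j) * N.choose j) := by
  rw [add_pow]
  refine sum_congr rfl fun j hj => ?_
  have hjN : j ≤ N := Nat.lt_succ_iff.mp (mem_range.mp hj)
  rw [show 2 * (j : ℤ) - N = j + -(N - j : ℕ) by push_cast [hjN]; ring, zpow_add₀ hu, zpow_neg,
    zpow_natCast, zpow_natCast, mul_pow, mul_pow, inv_pow]
  ring

namespace Complex

theorem cos_mul_add_sin_mul (θ a b : ℂ) :
    cos θ * a + sin θ * b =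
      (exp (θ * I) * (a - b * I) + (exp (θ * I))⁻¹ * (a + b * I)) / 2 := by
  rw [cos, sin, neg_mul, exp_neg]
  ring

theorem sum_exp_mul_I_zpow_eq_zero {n : ℕ} {m : ℤ} (hm : ¬ (n : ℤ) ∣ m) (φ : ℂ) :
    ∑ k ∈ range n, exp ((k * π / n + φ) * I) ^ (2 * m) = 0 := by
  rcases eq_or_ne n 0 with rfl | hn
  · simp
  have hζ := isPrimitiveRoot_exp n hn
  calc ∑ k ∈ range n, exp ((k * π / n + φ) * I) ^ (2 * m)
      = ∑ k ∈ range n, exp (2 * m * φ * I) * (exp (2 * π * I / n) ^ m) ^ k := by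
        refine sum_congr rfl fun k _ => ?_
        rw [← exp_int_mul, ← exp_int_mul, ← exp_nat_mul, ← exp_add]
        push_cast
        congr 1
        ring
    _ = 0 := by rw [← mul_sum, hζ.geom_sum_zpow_eq_zero hm, mul_zero]

theorem sum_cos_mul_add_sin_mul_pow {n d : ℕ} (hdn : d < n) (φ x y : ℂ) :
    ∑ k ∈ range n, (cos (k * π / n + φ) * x + sin (k * π / n + φ) * y) ^ (2 * d) =
      n * (2 * d).choose d / 2 ^ (2 * d) * (x ^ 2 + y ^ 2) ^ d := by
  set c : ℕ → ℂ := fun j => (x - y * I) ^ j * (x + y * I) ^ (2 * d - j) * (2 * d).choose j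
  have hexp (j : ℕ) : 2 * (j : ℤ) - (2 * d : ℕ) = 2 * ((j : ℤ) - d) := by push_cast; ring
  calc ∑ k ∈ range n, (cos (k * π / n + φ) * x + sin (k * π / n + φ) * y) ^ (2 * d)
      = ∑ k ∈ range n, ∑ j ∈ range (2 * d + 1),
          exp ((k * π / n + φ) * I) ^ (2 * ((j : ℤ) - d)) * c j / 2 ^ (2 * d) := by
        simp_rw [cos_mul_add_sin_mul, div_pow, mul_add_inv_mul_pow (exp_ne_zero _), sum_div, hexp]
        rfl
    _ = ∑ j ∈ range (2 * d + 1),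
          (∑ k ∈ range n, exp ((k * π / n + φ) * I) ^ (2 * ((j : ℤ) - d))) * c j / 2 ^ (2 * d) := by
        rw [sum_comm]
        simp_rw [sum_mul, sum_div]
    _ = n * c d / 2 ^ (2 * d) := by
        rw [sum_eq_single d]
        · simp
        · intro j hj hjd
          have hj : j < 2 * d + 1 := mem_range.1 hj
          have hndvd : ¬ (n : ℤ) ∣ j - d := fun h => hjd <| by
            have := Int.eq_zero_of_abs_lt_dvd h (by rw [abs_lt]; omega)
            omega
          rw [sum_exp_mul_I_zpow_eq_zero hndvd, zero_mul, zero_div]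
        · intro hd
          exact absurd (mem_range.2 (by omega)) hd
    _ = n * (2 * d).choose d / 2 ^ (2 * d) * (x ^ 2 + y ^ 2) ^ d := by
        have hwz : (x - y * I) * (x + y * I) = x ^ 2 + y ^ 2 := by
          linear_combination -y ^ 2 * I_sq
        simp only [c]
        rw [show 2 * d - d = d by omega, ← mul_pow, hwz]
        ring

end Complex

theorem Real.sum_cos_mul_add_sin_mul_pow {n d : ℕ} (hdn : d < n) (φ x y : ℝ) :
    ∑ k ∈ range n, (cos (k * π / n + φ) * x + sin (k * π / n + φ) * y) ^ (2 * d) =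
      n * (2 * d).choose d / 2 ^ (2 * d) * (x ^ 2 + y ^ 2) ^ d := by
  apply Complex.ofReal_injective
  push_cast
  exact Complex.sum_cos_mul_add_sin_mul_pow hdn φ x y

/-- Reznick's identity: for every real `φ`, with `R = 2⁻¹²·7·C(12,6)`,
`Σ_{k=0}^{6} (cos(kπ/7 + φ)·x + sin(kπ/7 + φ)·y)^{12} = R·(x² + y²)^6`
for all real `x, y`. -/
theorem reznick_identity (φ x y : ℝ) :
    ∑ k ∈ Finset.range 7,
        (Real.cos (k * Real.pi / 7 + φ) * x + Real.sin (k * Real.pi / 7 + φ) * y) ^ 12 =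
      (7 * (Nat.choose 12 6 : ℝ) / 2 ^ 12) * (x ^ 2 + y ^ 2) ^ 6 := by
  simpa using Real.sum_cos_mul_add_sin_mul_pow (n := 7) (d := 6) (by norm_num) φ x y
end
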